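/- Let E: Z^d → R be invariant under reflections in coordinate hyperplanes and permutations of coordinates, with ∑_x E(x) = 0, ∑_x |x|² E(x) = 0, and |E(x)| ≤ K·(|x| ∨ 1)^{−(d+2+ρ)} for some K, ρ > 0. Let σ ∈ (0, ρ) with σ ≤ 2. Then there is a constant c = c(σ, ρ, d) such that |\hat{E}(k)| ≤ c·K·|k|^{2+σ} for all k ∈ (−π,π]^d, where \hat{E}(k) = ∑_x E(x)·e^{i k·x}. -/

import Mathlib

open scoped Real BigOperators

/-- Euclidean norm of a point of `ℤ^d`. -/
noncomputable def zNorm {d : ℕ} (x : Fin d → ℤ) : ℝ := Real.sqrt (∑ i, ((x i : ℝ)) ^ 2)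

/-- `|x| ∨ 1`. -/
noncomputable def zNorm1 {d : ℕ} (x : Fin d → ℤ) : ℝ := max (zNorm x) 1

/-- Euclidean norm of a point of `ℝ^d`. -/
noncomputable def rNorm {d : ℕ} (k : Fin d → ℝ) : ℝ := Real.sqrt (∑ i, (k i) ^ 2)

/-- The Fourier transform `ĥ(k) = ∑_x h(x) e^{i k·x}` of `h : ℤ^d → ℝ`. -/
noncomputable def ftZ {d : ℕ} (h : (Fin d → ℤ) → ℝ) (k : Fin d → ℝ) : ℂ :=
  ∑' x : Fin d → ℤ, (h x : ℂ) * Complex.exp (Complex.I * ((∑ i, k i * (x i : ℝ) : ℝ) : ℂ))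

/-- Invariance under reflection in coordinate hyperplanes. -/
def ReflSymm {d : ℕ} (E : (Fin d → ℤ) → ℝ) : Prop :=
  ∀ (x : Fin d → ℤ) (j : Fin d), E (Function.update x j (-(x j))) = E x

/-- Invariance under permutations of the coordinates. -/
def PermSymm {d : ℕ} (E : (Fin d → ℤ) → ℝ) : Prop :=
  ∀ (x : Fin d → ℤ) (σ : Equiv.Perm (Fin d)), E (x ∘ σ) = E x

lemma zNorm_nonneg {d : ℕ} (x : Fin d → ℤ) : 0 ≤ zNorm x := Real.sqrt_nonneg _
lemma one_le_zNorm1 {d : ℕ} (x : Fin d → ℤ) : 1 ≤ zNorm1 x := le_max_right _ _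
lemma zNorm1_pos {d : ℕ} (x : Fin d → ℤ) : 0 < zNorm1 x := lt_of_lt_of_le one_pos (one_le_zNorm1 x)
lemma zNorm_le_zNorm1 {d : ℕ} (x : Fin d → ℤ) : zNorm x ≤ zNorm1 x := le_max_left _ _

lemma zNorm_sq {d : ℕ} (x : Fin d → ℤ) : zNorm x ^ 2 = ∑ i, ((x i : ℝ)) ^ 2 :=
  Real.sq_sqrt (Finset.sum_nonneg fun i _ => sq_nonneg _)

lemma abs_coord_le_zNorm {d : ℕ} (x : Fin d → ℤ) (i : Fin d) : |(x i : ℝ)| ≤ zNorm x := by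
  rw [← Real.sqrt_sq_eq_abs, zNorm]
  exact Real.sqrt_le_sqrt (Finset.single_le_sum (fun j _ => sq_nonneg ((x j : ℝ))) (Finset.mem_univ i))

lemma summable_max_rpow {b : ℝ} (hb : 1 < b) :
    Summable (fun n : ℤ => (max |(n : ℝ)| 1) ^ (-b)) := by
  have h1 := Real.summable_abs_int_rpow hb
  have h2 : Summable (fun n : ℤ => if n = 0 then (1:ℝ) else 0) := (hasSum_ite_eq (0:ℤ) (1:ℝ)).summable
  refine Summable.of_nonneg_of_le (fun n => Real.rpow_nonneg (by positivity) _) (fun n => ?_) (h1.add h2)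
  by_cases hn : n = 0
  · subst hn
    simp [Real.zero_rpow (by linarith : -b ≠ 0), Real.one_rpow]
  · have h1n : (1:ℝ) ≤ |(n:ℝ)| := by
      have := Int.one_le_abs (by exact_mod_cast hn)
      exact_mod_cast this
    rw [max_eq_left h1n]
    simp [hn]

lemma summable_pi_prod : ∀ (d : ℕ) (w : ℤ → ℝ), (∀ n, 0 ≤ w n) → Summable w →
    Summable (fun x : Fin d → ℤ => ∏ i, w (x i)) := by
  intro d
  induction d with
  | zero => intro w _ _; exact Summable.of_finite
  | succ n ih =>
    intro w hw hsw
    have h := hsw.mul_of_nonneg (ih w hw hsw) hw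
      (fun x => Finset.prod_nonneg fun i _ => hw _)
    have e := Fin.consEquiv (fun _ : Fin (n+1) => ℤ)
    rw [← (Fin.consEquiv (fun _ : Fin (n+1) => ℤ)).summable_iff]
    apply h.congr
    intro p
    simp [Fin.consEquiv, Fin.prod_univ_succ]

lemma summable_zNorm1_rpow {d : ℕ} (hd : 0 < d) {ε : ℝ} (hε : 0 < ε) :
    Summable (fun x : Fin d → ℤ => zNorm1 x ^ (-((d:ℝ) + ε))) := by
  set b : ℝ := 1 + ε / d with hbdef
  have hdpos : (0:ℝ) < d := by exact_mod_cast hd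
  have hb : 1 < b := by
    have : 0 < ε / d := div_pos hε hdpos
    simp [hbdef]; linarith
  have hsum := summable_pi_prod d (fun n => (max |(n : ℝ)| 1) ^ (-b))
    (fun n => Real.rpow_nonneg (by positivity) _) (summable_max_rpow hb)
  refine Summable.of_nonneg_of_le (fun x => Real.rpow_nonneg (zNorm1_pos x).le _)
    (fun x => ?_) hsum
  have hmle : ∀ i, max |(x i : ℝ)| 1 ≤ zNorm1 x := fun i =>
    max_le_max (abs_coord_le_zNorm x i) le_rfl
  have hmpos : ∀ i, (0:ℝ) < max |(x i : ℝ)| 1 := fun i => by positivity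
  have hprod : zNorm1 x ^ ((d:ℝ) + ε) ≥ ∏ i, (max |(x i : ℝ)| 1) ^ b := by
    calc ∏ i, (max |(x i : ℝ)| 1) ^ b
        ≤ ∏ _i : Fin d, zNorm1 x ^ b :=
          Finset.prod_le_prod (fun i _ => Real.rpow_nonneg (hmpos i).le _)
            (fun i _ => Real.rpow_le_rpow (hmpos i).le (hmle i) (by linarith))
      _ = (zNorm1 x ^ b) ^ (d:ℕ) := by rw [Finset.prod_const, Finset.card_univ, Fintype.card_fin]
      _ = zNorm1 x ^ (b * d) := by
          rw [← Real.rpow_natCast (zNorm1 x ^ b) d, ← Real.rpow_mul (zNorm1_pos x).le]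
      _ = zNorm1 x ^ ((d:ℝ) + ε) := by
          congr 1
          rw [hbdef, add_mul, div_mul_cancel₀ _ hdpos.ne', one_mul]
  have hppos : (0:ℝ) < ∏ i, (max |(x i : ℝ)| 1) ^ b :=
    Finset.prod_pos fun i _ => Real.rpow_pos_of_pos (hmpos i) _
  calc zNorm1 x ^ (-((d:ℝ) + ε)) = (zNorm1 x ^ ((d:ℝ) + ε))⁻¹ := by
        rw [Real.rpow_neg (zNorm1_pos x).le]
    _ ≤ (∏ i, (max |(x i : ℝ)| 1) ^ b)⁻¹ := by
        exact inv_anti₀ hppos hprod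
    _ = ∏ i, (max |(x i : ℝ)| 1) ^ (-b) := by
        rw [← Finset.prod_inv_distrib]
        exact Finset.prod_congr rfl fun i _ => (Real.rpow_neg (hmpos i).le _).symm

lemma cos_approx {σ : ℝ} (hσ : 0 < σ) (hσ2 : σ ≤ 2) (t : ℝ) :
    |Real.cos t - 1 + t ^ 2 / 2| ≤ |t| ^ (2 + σ) := by
  rcases eq_or_ne t 0 with rfl | ht
  · simp [Real.zero_rpow (by positivity : (2:ℝ) + σ ≠ 0)]
  have habs : 0 < |t| := abs_pos.2 ht
  by_cases h1 : |t| ≤ 1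
  · have hb := Real.cos_bound h1
    have h4 : |t| ^ (4:ℕ) ≤ |t| ^ (2 + σ) := by
      have := Real.rpow_le_rpow_of_exponent_ge habs h1 (by linarith : 2 + σ ≤ (4:ℝ))
      rwa [show ((4:ℝ)) = ((4:ℕ):ℝ) by norm_num, Real.rpow_natCast] at this
    calc |Real.cos t - 1 + t ^ 2 / 2| = |Real.cos t - (1 - t ^ 2 / 2)| := by ring_nf
      _ ≤ |t| ^ 4 * (5 / 96) := hb
      _ ≤ |t| ^ (4:ℕ) * 1 := by
          apply mul_le_mul_of_nonneg_left (by norm_num) (by positivity)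
      _ = |t| ^ (4:ℕ) := mul_one _
      _ ≤ |t| ^ (2 + σ) := h4
  · push_neg at h1
    have hcb : |Real.cos t - 1 + t ^ 2 / 2| ≤ t ^ 2 := by
      have h2 := Real.one_sub_sq_div_two_le_cos (x := t)
      have h3 := Real.cos_le_one t
      rw [abs_le]
      constructor <;> nlinarith [sq_nonneg t]
    have h5 : t ^ 2 ≤ |t| ^ (2 + σ) := by
      have h6 : |t| ^ (2:ℝ) ≤ |t| ^ (2 + σ) :=
        Real.rpow_le_rpow_of_exponent_le h1.le (by linarith)
      rwa [show |t| ^ (2:ℝ) = t ^ 2 by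
        rw [show (2:ℝ) = ((2:ℕ):ℝ) by norm_num, Real.rpow_natCast, sq_abs]] at h6
    linarith

lemma refl_neg {d : ℕ} {E : (Fin d → ℤ) → ℝ} (hE : ReflSymm E) (x : Fin d → ℤ) :
    E (-x) = E x := by
  have key : ∀ s : Finset (Fin d), E (fun i => if i ∈ s then -x i else x i) = E x := by
    intro s
    induction s using Finset.induction_on with
    | empty => simp
    | @insert j s hj ih =>
      have heq : (fun i => if i ∈ insert j s then -x i else x i)
          = Function.update (fun i => if i ∈ s then -x i else x i) j
            (-((fun i => if i ∈ s then -x i else x i) j)) := by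
        funext i
        by_cases hij : i = j
        · subst hij; simp [Function.update_self, hj]
        · simp [Function.update_of_ne hij, Finset.mem_insert, hij]
      rw [heq, hE]
      exact ih
  have h := key Finset.univ
  have h' : E (fun i => -x i) = E x := by simpa using h
  exact h'

lemma tsum_eq_zero_of_neg {ι : Type*} (T : ι ≃ ι) (f : ι → ℝ) (h : ∀ x, f (T x) = -f x) :
    ∑' x, f x = 0 := by
  have h1 : ∑' x, f (T x) = ∑' x, f x := T.tsum_eq f
  have h2 : ∑' x, f (T x) = -∑' x, f x := by
    calc ∑' x, f (T x) = ∑' x, -f x := by exact tsum_congr h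
      _ = -∑' x, f x := tsum_neg
  linarith [h1, h2]

/-- Reflection in coordinate `j` as an equivalence. -/
def reflEquiv {d : ℕ} (j : Fin d) : (Fin d → ℤ) ≃ (Fin d → ℤ) where
  toFun x := Function.update x j (-(x j))
  invFun x := Function.update x j (-(x j))
  left_inv x := by
    funext i
    by_cases h : i = j
    · subst h; simp [Function.update_self]
    · simp [Function.update_of_ne h]
  right_inv x := by
    funext i
    by_cases h : i = j
    · subst h; simp [Function.update_self]
    · simp [Function.update_of_ne h]

lemma moment_offdiag {d : ℕ} {E : (Fin d → ℤ) → ℝ} (hE : ReflSymm E) {i j : Fin d}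
    (hij : i ≠ j) : ∑' x : Fin d → ℤ, ((x i : ℝ) * (x j : ℝ)) * E x = 0 := by
  apply tsum_eq_zero_of_neg (reflEquiv j)
  intro x
  have h1 : (reflEquiv j x) i = x i := Function.update_of_ne hij _ _
  have h2 : (reflEquiv j x) j = -(x j) := Function.update_self _ _ _
  have h3 : E (reflEquiv j x) = E x := hE x j
  simp only [h1, h2, h3]
  push_cast
  ring

lemma perm_coord_tsum {d : ℕ} {E : (Fin d → ℤ) → ℝ} (hE : PermSymm E) (i i0 : Fin d) :
    ∑' x : Fin d → ℤ, ((x i : ℝ)) ^ 2 * E x = ∑' x : Fin d → ℤ, ((x i0 : ℝ)) ^ 2 * E x := by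
  set σ : Equiv.Perm (Fin d) := Equiv.swap i i0 with hσ
  set T : (Fin d → ℤ) ≃ (Fin d → ℤ) := Equiv.arrowCongr σ.symm (Equiv.refl ℤ) with hT
  have hTx : ∀ x : Fin d → ℤ, T x = x ∘ σ := by
    intro x; funext a; simp [hT, Equiv.arrowCongr]
  have := (T.tsum_eq (fun x => ((x i0 : ℝ)) ^ 2 * E x)).symm
  rw [this]
  apply tsum_congr
  intro x
  rw [hTx x, hE x σ]
  congr 2
  simp [hσ, Equiv.swap_apply_right]

lemma summable_weight {d : ℕ} (hd : 0 < d) {E : (Fin d → ℤ) → ℝ} {K ρ : ℝ} (hρ : 0 < ρ)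
    (hbd : ∀ x, |E x| ≤ K * zNorm1 x ^ (-((d:ℝ) + 2 + ρ))) (hK : 0 ≤ K)
    {a : ℝ} (ha : a < 2 + ρ) :
    Summable (fun x : Fin d → ℤ => zNorm1 x ^ a * |E x|) := by
  have hε : (0:ℝ) < 2 + ρ - a := by linarith
  refine Summable.of_nonneg_of_le (fun x => mul_nonneg (Real.rpow_nonneg (zNorm1_pos x).le _) (abs_nonneg _)) (fun x => ?_)
    ((summable_zNorm1_rpow hd hε).mul_left K)
  calc zNorm1 x ^ a * |E x| ≤ zNorm1 x ^ a * (K * zNorm1 x ^ (-((d:ℝ) + 2 + ρ))) := by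
        apply mul_le_mul_of_nonneg_left (hbd x) (Real.rpow_nonneg (zNorm1_pos x).le _)
    _ = K * zNorm1 x ^ (-((d:ℝ) + (2 + ρ - a))) := by
        rw [show -((d:ℝ) + (2 + ρ - a)) = a + (-((d:ℝ) + 2 + ρ)) by ring,
          Real.rpow_add (zNorm1_pos x)]
        ring


/-- If `E` is `ℤ^d`-symmetric with vanishing zeroth and second moments and
`|E(x)| ≤ K (|x|∨1)^{−(d+2+ρ)}`, then `|Ê(k)| ≤ c K |k|^{2+σ}` for `0 < σ < ρ`, `σ ≤ 2`. -/
theorem Ehat_bound (d : ℕ) (hd : 0 < d) (ρ σ : ℝ) (hρ : 0 < ρ) (hσ : 0 < σ)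
    (hσρ : σ < ρ) (hσ2 : σ ≤ 2) :
    ∃ c : ℝ, 0 < c ∧
      ∀ (E : (Fin d → ℤ) → ℝ) (K : ℝ), 0 < K →
        ReflSymm E → PermSymm E →
        (∑' x, E x) = 0 →
        (∑' x, zNorm x ^ 2 * E x) = 0 →
        (∀ x, |E x| ≤ K * zNorm1 x ^ (-((d:ℝ) + 2 + ρ))) →
        ∀ k : Fin d → ℝ, (∀ j, k j ∈ Set.Ioc (-π) π) →
          ‖ftZ E k‖ ≤ c * K * rNorm k ^ (2 + σ) := by
  have hεc : (0:ℝ) < ρ - σ := by linarith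
  have hWc : Summable (fun x : Fin d → ℤ => zNorm1 x ^ (-((d:ℝ) + (ρ - σ)))) :=
    summable_zNorm1_rpow hd hεc
  set c : ℝ := ∑' x : Fin d → ℤ, zNorm1 x ^ (-((d:ℝ) + (ρ - σ))) with hc
  have hc1 : 1 ≤ c := by
    have h0 : zNorm1 (0 : Fin d → ℤ) ^ (-((d:ℝ) + (ρ - σ))) = 1 := by
      have hz : zNorm (0 : Fin d → ℤ) = 0 := by simp [zNorm]
      simp [zNorm1, hz]
    calc (1:ℝ) = zNorm1 (0 : Fin d → ℤ) ^ (-((d:ℝ) + (ρ - σ))) := h0.symm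
      _ ≤ c := hWc.le_tsum 0 (fun x _ => Real.rpow_nonneg (zNorm1_pos x).le _)
  refine ⟨c, by linarith, ?_⟩
  intro E K hK hRefl hPerm h0m h2m hbd k _hk
  set t : (Fin d → ℤ) → ℝ := fun x => ∑ i, k i * (x i : ℝ) with hts
  have hKle := hK.le
  have SW : ∀ {a : ℝ}, a < 2 + ρ → Summable (fun x => zNorm1 x ^ a * |E x|) :=
    fun ha => summable_weight hd hρ hbd hKle ha
  have sum_absE : Summable (fun x => |E x|) := by
    have h := SW (show (0:ℝ) < 2 + ρ by linarith)
    simpa [Real.rpow_zero] using h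
  have sumE : Summable E := sum_absE.of_abs
  have hz2 : ∀ x : Fin d → ℤ, zNorm1 x ^ (2:ℝ) = zNorm1 x ^ (2:ℕ) := fun x => by
    rw [show (2:ℝ) = ((2:ℕ):ℝ) by norm_num, Real.rpow_natCast]
  have SW2 : Summable (fun x => zNorm1 x ^ (2:ℝ) * |E x|) := SW (by linarith)
  -- generic summability of quadratic-weight multiples of E
  have sumQ : ∀ (C : ℝ) (f : (Fin d → ℤ) → ℝ), (∀ x, |f x| ≤ C * zNorm1 x ^ (2:ℕ)) →
      Summable (fun x => f x * E x) := by
    intro C f hf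
    apply Summable.of_abs
    refine Summable.of_nonneg_of_le (fun x => abs_nonneg _) (fun x => ?_) (SW2.mul_left C)
    calc |f x * E x| = |f x| * |E x| := abs_mul _ _
      _ ≤ (C * zNorm1 x ^ (2:ℕ)) * |E x| :=
          mul_le_mul_of_nonneg_right (hf x) (abs_nonneg _)
      _ = C * (zNorm1 x ^ (2:ℝ) * |E x|) := by rw [hz2 x]; ring
  have hcoordz : ∀ (x : Fin d → ℤ) (i : Fin d), |(x i : ℝ)| ≤ zNorm1 x :=
    fun x i => (abs_coord_le_zNorm x i).trans (zNorm_le_zNorm1 x)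
  have sum_coord : ∀ i j : Fin d, Summable (fun x => (((x i : ℝ)) * ((x j : ℝ))) * E x) := by
    intro i j
    apply sumQ 1
    intro x
    calc |(x i : ℝ) * (x j : ℝ)| = |(x i : ℝ)| * |(x j : ℝ)| := abs_mul _ _
      _ ≤ zNorm1 x * zNorm1 x :=
          mul_le_mul (hcoordz x i) (hcoordz x j) (abs_nonneg _) (zNorm1_pos x).le
      _ = 1 * zNorm1 x ^ (2:ℕ) := by ring
  have sum_coord_sq : ∀ i : Fin d, Summable (fun x => ((x i : ℝ)) ^ 2 * E x) := by
    intro i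
    have h := sum_coord i i
    apply h.congr
    intro x
    rw [← sq]
  -- all second moments vanish
  have moment2 : ∀ i j : Fin d, ∑' x : Fin d → ℤ, (((x i : ℝ)) * ((x j : ℝ))) * E x = 0 := by
    intro i j
    rcases eq_or_ne i j with rfl | hij
    · set i0 : Fin d := ⟨0, hd⟩
      have hM : ∀ i' : Fin d, ∑' x : Fin d → ℤ, ((x i' : ℝ)) ^ 2 * E x
          = ∑' x : Fin d → ℤ, ((x i0 : ℝ)) ^ 2 * E x := fun i' => perm_coord_tsum hPerm i' i0
      have hsum_eq : ∑ i' : Fin d, ∑' x : Fin d → ℤ, ((x i' : ℝ)) ^ 2 * E x = 0 := by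
        rw [← Summable.tsum_finsetSum (fun i' _ => sum_coord_sq i')]
        rw [show (fun x : Fin d → ℤ => ∑ i' : Fin d, ((x i' : ℝ)) ^ 2 * E x)
            = fun x => zNorm x ^ 2 * E x from funext fun x => by
          rw [zNorm_sq, Finset.sum_mul]]
        exact h2m
      have hd_mul : (d:ℝ) * (∑' x : Fin d → ℤ, ((x i0 : ℝ)) ^ 2 * E x) = 0 := by
        rw [← hsum_eq]
        rw [Finset.sum_congr rfl (fun i' _ => hM i')]
        rw [Finset.sum_const, Finset.card_univ, Fintype.card_fin, nsmul_eq_mul]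
      have hdne : (d:ℝ) ≠ 0 := by positivity
      have hM0 : ∑' x : Fin d → ℤ, ((x i0 : ℝ)) ^ 2 * E x = 0 :=
        (mul_eq_zero.1 hd_mul).resolve_left hdne
      calc ∑' x : Fin d → ℤ, (((x i : ℝ)) * ((x i : ℝ))) * E x
          = ∑' x : Fin d → ℤ, ((x i : ℝ)) ^ 2 * E x := tsum_congr fun x => by rw [← sq]
        _ = ∑' x : Fin d → ℤ, ((x i0 : ℝ)) ^ 2 * E x := hM i
        _ = 0 := hM0
    · exact moment_offdiag hRefl hij
  -- second moment in direction k vanishes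
  have hT2 : ∑' x : Fin d → ℤ, t x ^ 2 * E x = 0 := by
    have hexpand : ∀ x : Fin d → ℤ, t x ^ 2 * E x
        = ∑ p : Fin d × Fin d, (k p.1 * k p.2) * ((((x p.1 : ℝ)) * ((x p.2 : ℝ))) * E x) := by
      intro x
      have h1 : t x ^ 2 = ∑ p : Fin d × Fin d, (k p.1 * (x p.1 : ℝ)) * (k p.2 * (x p.2 : ℝ)) := by
        rw [sq, hts]
        rw [Fintype.sum_mul_sum]
        rw [← Finset.univ_product_univ, Finset.sum_product]
      rw [h1, Finset.sum_mul]
      exact Finset.sum_congr rfl fun p _ => by ring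
    calc ∑' x : Fin d → ℤ, t x ^ 2 * E x
        = ∑' x : Fin d → ℤ, ∑ p : Fin d × Fin d,
            (k p.1 * k p.2) * ((((x p.1 : ℝ)) * ((x p.2 : ℝ))) * E x) := tsum_congr hexpand
      _ = ∑ p : Fin d × Fin d, ∑' x : Fin d → ℤ,
            (k p.1 * k p.2) * ((((x p.1 : ℝ)) * ((x p.2 : ℝ))) * E x) :=
          Summable.tsum_finsetSum (fun p _ => (sum_coord p.1 p.2).mul_left _)
      _ = 0 := Finset.sum_eq_zero fun p _ => by
          rw [tsum_mul_left, moment2 p.1 p.2, mul_zero]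
  -- Cauchy–Schwarz
  have hrN : 0 ≤ rNorm k := Real.sqrt_nonneg _
  have hCS : ∀ x : Fin d → ℤ, |t x| ≤ rNorm k * zNorm1 x := by
    intro x
    have h1 : (t x) ^ 2 ≤ (∑ i, (k i) ^ 2) * (∑ i, ((x i : ℝ)) ^ 2) := by
      rw [hts]
      exact Finset.sum_mul_sq_le_sq_mul_sq _ _ _
    have h2 : |t x| ≤ rNorm k * zNorm x := by
      rw [← Real.sqrt_sq_eq_abs]
      calc Real.sqrt ((t x) ^ 2) ≤ Real.sqrt ((∑ i, (k i) ^ 2) * (∑ i, ((x i : ℝ)) ^ 2)) :=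
            Real.sqrt_le_sqrt h1
        _ = rNorm k * zNorm x := by
            rw [Real.sqrt_mul (Finset.sum_nonneg fun i _ => sq_nonneg _)]; rfl
    exact h2.trans (mul_le_mul_of_nonneg_left (zNorm_le_zNorm1 x) hrN)
  have htpow : ∀ x : Fin d → ℤ, |t x| ^ (2 + σ) ≤ rNorm k ^ (2 + σ) * zNorm1 x ^ (2 + σ) := by
    intro x
    calc |t x| ^ (2 + σ) ≤ (rNorm k * zNorm1 x) ^ (2 + σ) :=
        Real.rpow_le_rpow (abs_nonneg _) (hCS x) (by linarith)
      _ = rNorm k ^ (2 + σ) * zNorm1 x ^ (2 + σ) := Real.mul_rpow hrN (zNorm1_pos x).le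
  -- the remainder term
  set A : (Fin d → ℤ) → ℝ := fun x => E x * (Real.cos (t x) - 1 + t x ^ 2 / 2) with hA
  set W : (Fin d → ℤ) → ℝ := fun x => zNorm1 x ^ (-((d:ℝ) + (ρ - σ))) with hW
  have hAbound : ∀ x, |A x| ≤ K * rNorm k ^ (2 + σ) * W x := by
    intro x
    calc |A x| = |E x| * |Real.cos (t x) - 1 + t x ^ 2 / 2| := abs_mul _ _
      _ ≤ (K * zNorm1 x ^ (-((d:ℝ) + 2 + ρ))) * (|t x| ^ (2 + σ)) :=
          mul_le_mul (hbd x) (cos_approx hσ hσ2 (t x)) (abs_nonneg _)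
            (le_trans (abs_nonneg _) (hbd x))
      _ ≤ (K * zNorm1 x ^ (-((d:ℝ) + 2 + ρ))) * (rNorm k ^ (2 + σ) * zNorm1 x ^ (2 + σ)) :=
          mul_le_mul_of_nonneg_left (htpow x)
            (mul_nonneg hKle (Real.rpow_nonneg (zNorm1_pos x).le _))
      _ = K * rNorm k ^ (2 + σ) * (zNorm1 x ^ (-((d:ℝ) + 2 + ρ)) * zNorm1 x ^ (2 + σ)) := by
          ring
      _ = K * rNorm k ^ (2 + σ) * W x := by
          simp only [hW]
          have hzz : zNorm1 x ^ (-((d:ℝ) + 2 + ρ)) * zNorm1 x ^ (2 + σ)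
              = zNorm1 x ^ (-((d:ℝ) + (ρ - σ))) := by
            rw [← Real.rpow_add (zNorm1_pos x)]
            congr 1
            ring
          rw [← hzz]
  have sumW : Summable W := hWc
  have sumWc : Summable (fun x => K * rNorm k ^ (2 + σ) * W x) := sumW.mul_left _
  have sumAbsA : Summable (fun x => |A x|) :=
    Summable.of_nonneg_of_le (fun _ => abs_nonneg _) hAbound sumWc
  have sumA : Summable A := sumAbsA.of_abs
  -- summability of t² E
  have sumC' : Summable (fun x => t x ^ 2 * E x) := by
    apply sumQ (rNorm k ^ 2)
    intro x
    calc |t x ^ 2| = |t x| ^ 2 := by rw [sq_abs, abs_of_nonneg (sq_nonneg _)]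
      _ ≤ (rNorm k * zNorm1 x) ^ 2 := pow_le_pow_left₀ (abs_nonneg _) (hCS x) 2
      _ = rNorm k ^ 2 * zNorm1 x ^ (2:ℕ) := by ring
  -- sine sum vanishes
  have hsin : ∑' x : Fin d → ℤ, E x * Real.sin (t x) = 0 := by
    apply tsum_eq_zero_of_neg (Equiv.neg (Fin d → ℤ))
    intro x
    have h1 : E (-x) = E x := refl_neg hRefl x
    have h2 : t (-x) = -t x := by
      rw [hts]
      simp [mul_neg, Finset.sum_neg_distrib]
    simp only [Equiv.neg_apply, h1, h2, Real.sin_neg, mul_neg, neg_neg]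
  -- summabilities of cos/sin weighted sums
  have sumBnd : ∀ g : ℝ → ℝ, (∀ u, |g u| ≤ 1) → Summable (fun x => E x * g (t x)) := by
    intro g hg
    apply Summable.of_abs
    refine Summable.of_nonneg_of_le (fun x => abs_nonneg _) (fun x => ?_) sum_absE
    calc |E x * g (t x)| = |E x| * |g (t x)| := abs_mul _ _
      _ ≤ |E x| * 1 := mul_le_mul_of_nonneg_left (hg _) (abs_nonneg _)
      _ = |E x| := mul_one _
  have sumcos : Summable (fun x => E x * Real.cos (t x)) :=
    sumBnd Real.cos (fun u => Real.abs_cos_le_one u)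
  have sumsin : Summable (fun x => E x * Real.sin (t x)) :=
    sumBnd Real.sin (fun u => Real.abs_sin_le_one u)
  -- express ftZ via the real cosine sum
  have hunfold : ftZ E k = ∑' x : Fin d → ℤ,
      (E x : ℂ) * Complex.exp (Complex.I * ((t x : ℝ) : ℂ)) := rfl
  have hterm : ∀ x : Fin d → ℤ, (E x : ℂ) * Complex.exp (Complex.I * ((t x : ℝ) : ℂ))
      = ((E x * Real.cos (t x) : ℝ) : ℂ) + ((E x * Real.sin (t x) : ℝ) : ℂ) * Complex.I := by
    intro x
    rw [mul_comm Complex.I, Complex.exp_mul_I]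
    push_cast
    ring
  have hft : ftZ E k = ((∑' x : Fin d → ℤ, E x * Real.cos (t x) : ℝ) : ℂ) := by
    rw [hunfold, tsum_congr hterm]
    rw [Summable.tsum_add (Complex.summable_ofReal.2 sumcos)
      ((Complex.summable_ofReal.2 sumsin).mul_right Complex.I)]
    rw [tsum_mul_right, ← Complex.ofReal_tsum, ← Complex.ofReal_tsum, hsin]
    simp
  -- the cosine sum equals the remainder sum
  have hcos_sum : ∑' x : Fin d → ℤ, E x * Real.cos (t x) = ∑' x, A x := by
    have hdecomp : ∀ x, E x * Real.cos (t x) = A x + (E x - t x ^ 2 * E x / 2) := by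
      intro x
      rw [hA]
      ring
    calc ∑' x : Fin d → ℤ, E x * Real.cos (t x)
        = ∑' x : Fin d → ℤ, (A x + (E x - t x ^ 2 * E x / 2)) := tsum_congr hdecomp
      _ = (∑' x, A x) + ∑' x : Fin d → ℤ, (E x - t x ^ 2 * E x / 2) :=
          Summable.tsum_add sumA (sumE.sub (sumC'.div_const 2))
      _ = (∑' x, A x) + ((∑' x, E x) - ∑' x : Fin d → ℤ, t x ^ 2 * E x / 2) := by
          rw [Summable.tsum_sub sumE (sumC'.div_const 2)]
      _ = ∑' x, A x := by
          rw [h0m, tsum_div_const, hT2]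
          norm_num
  -- final estimate
  have habs : ‖ftZ E k‖ = |∑' x, A x| := by
    rw [hft, hcos_sum, Complex.norm_real, Real.norm_eq_abs]
  rw [habs]
  have h1 : |∑' x, A x| ≤ ∑' x, |A x| := by
    simpa [Real.norm_eq_abs] using
      norm_tsum_le_tsum_norm (f := A) (by simpa [Real.norm_eq_abs] using sumAbsA)
  have h2 : ∑' x, |A x| ≤ ∑' x, K * rNorm k ^ (2 + σ) * W x :=
    Summable.tsum_le_tsum hAbound sumAbsA sumWc
  have h3 : ∑' x, K * rNorm k ^ (2 + σ) * W x = K * rNorm k ^ (2 + σ) * c := by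
    rw [tsum_mul_left]
  calc |∑' x, A x| ≤ K * rNorm k ^ (2 + σ) * c := by
        rw [← h3]; exact h1.trans h2
    _ = c * K * rNorm k ^ (2 + σ) := by ring
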